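/- arXiv:2206.11236 — 2 statements merged into one kernel-verified Lean document; each statement's English description precedes it below -/
import Mathlib

section
/- For n ≥ 2 and 1 ≤ j ≤ n-1, the sum over derangements σ of [n] with σ(n) = j of (-1)^{cyc(σ)} · ∏_{i ∈ RLMv(σ)} x_i · ∏_{i ∈ EXCv(σ)} y_i equals -x₁⋯x_j · y_{j+1}⋯y_n. -/
/-!
Removing `n` from its cycle is a bijection from the derangements `σ` of `[n]` with `σ(n) = j`
onto the permutations `τ` of `[n-1]` whose only possible fixed point is `j`. It preserves the
parity of `cyc`, and `RLMv(σ) = {j} ∪ {v ∈ RLMv(τ) | v < j}`, `EXCv(σ) = {n} ∪ (EXCv(τ) \ {j})`.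
It remains to sum over such `τ` the weight that only counts these right-to-left minimum and
excedance values. If `τ` fixes `j`, it is a derangement of the other `n - 2` points with one
cycle more; otherwise it is a derangement of `[n-1]`. Grouping both parts by the value at the
last point gives instances of the theorem for `n - 2` and `n - 1`, and the two resulting sums
telescope to `-x₁⋯x_{j-1} y_{j+1}⋯y_{n-1}`.
-/

open Finset

/-- Number of cycles of a permutation (counting fixed points as 1-cycles). -/
def cyc {n : ℕ} (σ : Equiv.Perm (Fin n)) : ℕ :=
  σ.cycleType.card + (Finset.univ.filter fun i => σ i = i).card

/-- Set of excedance values of a permutation: values v with σ⁻¹ v < v. -/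
def excVal {n : ℕ} (σ : Equiv.Perm (Fin n)) : Finset (Fin n) :=
  Finset.univ.filter fun v => σ.symm v < v

/-- Set of right-to-left minimum indices. -/
def rlmIdx {n : ℕ} (σ : Equiv.Perm (Fin n)) : Finset (Fin n) :=
  Finset.univ.filter fun i => ∀ k, i < k → σ i < σ k

/-- Set of right-to-left minimum values. -/
def rlmVal {n : ℕ} (σ : Equiv.Perm (Fin n)) : Finset (Fin n) :=
  (rlmIdx σ).image σ

open Equiv Equiv.Perm Fin

lemma neg_one_pow_cyc {R : Type*} [Ring R] {n : ℕ} (σ : Perm (Fin n)) :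
    (-1 : R) ^ cyc σ = (-1) ^ n * ((sign σ : ℤ) : R) := by
  have hfix : #σ.support + #(univ.filter fun i => σ i = i) = n := by
    rw [add_comm, Perm.support, card_filter_add_card_filter_not]; simp
  rw [sign_of_cycleType, sum_cycleType]
  push_cast
  rw [← pow_add, neg_one_pow_eq_pow_mod_two, neg_one_pow_eq_pow_mod_two (n := n + _), cyc]
  congr 1
  omega

lemma mem_excVal {n : ℕ} {σ : Perm (Fin n)} {v : Fin n} : v ∈ excVal σ ↔ σ.symm v < v := by
  simp [excVal]

lemma mem_rlmVal {n : ℕ} {σ : Perm (Fin n)} {v : Fin n} :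
    v ∈ rlmVal σ ↔ ∀ k, σ.symm v < k → v < σ k := by
  simp only [rlmVal, rlmIdx, mem_image, mem_filter, mem_univ, true_and]
  constructor
  · rintro ⟨i, hi, rfl⟩
    simpa using hi
  · exact fun h => ⟨σ.symm v, by simpa using h, by simp⟩

section Decompose

variable {m : ℕ}

/-- `σ ↦ (σ j, σ with j deleted from its cycle)`, read through `finSuccEquiv' j`, which sends `j`
to `none`. -/
def decomposeAt (j : Fin (m + 1)) : Perm (Fin (m + 1)) ≃ Option (Fin m) × Perm (Fin m) :=
  (permCongr (finSuccEquiv' j)).trans decomposeOption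

lemma decomposeAt_symm_apply (j : Fin (m + 1)) (o : Option (Fin m)) (ρ : Perm (Fin m))
    (i : Fin (m + 1)) :
    (decomposeAt j).symm (o, ρ) i
      = (finSuccEquiv' j).symm (swap none o ((finSuccEquiv' j i).map ρ)) := by
  simp [decomposeAt, permCongr]

def extendAt (j : Fin (m + 1)) (ρ : Perm (Fin m)) : Perm (Fin (m + 1)) :=
  (decomposeAt j).symm (none, ρ)

/-- `last m` is inserted into the cycle of `τ` through `a`: `τ.symm a ↦ last m ↦ a`. -/
def insertLast (a : Fin m) (τ : Perm (Fin m)) : Perm (Fin (m + 1)) :=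
  (decomposeAt (last m)).symm (some a, τ)

lemma extendAt_apply_self (j : Fin (m + 1)) (ρ : Perm (Fin m)) : extendAt j ρ j = j := by
  simp [extendAt, decomposeAt_symm_apply]

lemma extendAt_apply_succAbove (j : Fin (m + 1)) (ρ : Perm (Fin m)) (i : Fin m) :
    extendAt j ρ (j.succAbove i) = j.succAbove (ρ i) := by
  simp [extendAt, decomposeAt_symm_apply]

lemma sign_extendAt (j : Fin (m + 1)) (ρ : Perm (Fin m)) : sign (extendAt j ρ) = sign ρ := by
  simp [extendAt, decomposeAt, sign_permCongr]

lemma insertLast_apply_last (a : Fin m) (τ : Perm (Fin m)) :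
    insertLast a τ (last m) = castSucc a := by
  simp [insertLast, decomposeAt_symm_apply]

lemma insertLast_apply_castSucc (a : Fin m) (τ : Perm (Fin m)) (i : Fin m) :
    insertLast a τ (castSucc i) = if τ i = a then last m else castSucc (τ i) := by
  rw [insertLast, ← succAbove_last_apply, decomposeAt_symm_apply, finSuccEquiv'_succAbove]
  split_ifs with h
  · simp [h]
  · simp [swap_apply_of_ne_of_ne, h]

lemma sign_insertLast (a : Fin m) (τ : Perm (Fin m)) : sign (insertLast a τ) = -sign τ := by
  simp [insertLast, decomposeAt, sign_permCongr]

lemma sum_filter_and_apply_eq {M : Type*} [AddCommMonoid M] (p : Perm (Fin (m + 1)) → Prop)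
    [DecidablePred p] {j k : Fin (m + 1)} {o : Option (Fin m)} (hk : finSuccEquiv' j k = o)
    (f : Perm (Fin (m + 1)) → M) :
    ∑ σ ∈ univ.filter (fun σ => p σ ∧ σ j = k), f σ
      = ∑ ρ ∈ univ.filter (fun ρ => p ((decomposeAt j).symm (o, ρ))),
          f ((decomposeAt j).symm (o, ρ)) := by
  have hfst (σ : Perm (Fin (m + 1))) : σ j = k ↔ (decomposeAt j σ).1 = o := by
    rw [← hk, ← (finSuccEquiv' j).apply_eq_iff_eq]
    rfl
  have hinv {σ : Perm (Fin (m + 1))} (hσ : σ j = k) :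
      (decomposeAt j).symm (o, (decomposeAt j σ).2) = σ := by
    rw [← (hfst σ).1 hσ, Prod.mk.eta, symm_apply_apply]
  refine sum_nbij' (fun σ => (decomposeAt j σ).2) (fun ρ => (decomposeAt j).symm (o, ρ))
    ?_ ?_ ?_ ?_ ?_ <;> simp only [mem_filter, mem_univ, true_and]
  · rintro σ ⟨hp, hσ⟩
    rwa [hinv hσ]
  · exact fun ρ hp => ⟨hp, (hfst _).2 (by rw [apply_symm_apply])⟩
  · exact fun σ hσ => hinv hσ.2
  · exact fun ρ _ => by rw [apply_symm_apply]
  · exact fun σ hσ => by rw [hinv hσ.2]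

lemma sum_filter_and_apply_self_eq {M : Type*} [AddCommMonoid M] (j : Fin (m + 1))
    (p : Perm (Fin (m + 1)) → Prop) [DecidablePred p] (f : Perm (Fin (m + 1)) → M) :
    ∑ σ ∈ univ.filter (fun σ => p σ ∧ σ j = j), f σ
      = ∑ ρ ∈ univ.filter (fun ρ => p (extendAt j ρ)), f (extendAt j ρ) :=
  sum_filter_and_apply_eq p (finSuccEquiv'_at j) f

lemma sum_filter_and_apply_last_eq {M : Type*} [AddCommMonoid M] (a : Fin m)
    (p : Perm (Fin (m + 1)) → Prop) [DecidablePred p] (f : Perm (Fin (m + 1)) → M) :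
    ∑ σ ∈ univ.filter (fun σ => p σ ∧ σ (last m) = castSucc a), f σ
      = ∑ τ ∈ univ.filter (fun τ => p (insertLast a τ)), f (insertLast a τ) :=
  sum_filter_and_apply_eq p (finSuccEquiv'_last_apply_castSucc a) f

end Decompose

section ExtendAt

variable {m : ℕ} (j : Fin (m + 1)) (ρ : Perm (Fin m))

lemma symm_extendAt_apply_succAbove (u : Fin m) :
    (extendAt j ρ).symm (j.succAbove u) = j.succAbove (ρ.symm u) := by
  rw [symm_apply_eq, extendAt_apply_succAbove, apply_symm_apply]

lemma forall_ne_extendAt_apply_ne_iff : (∀ i, i ≠ j → extendAt j ρ i ≠ i) ↔ ∀ u, ρ u ≠ u := by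
  simp [forall_iff_succAbove j, extendAt_apply_succAbove, succAbove_ne]

lemma filter_rlmVal_extendAt :
    (rlmVal (extendAt j ρ)).filter (· < j) = ((rlmVal ρ).image j.succAbove).filter (· < j) := by
  ext v
  obtain rfl | ⟨u, rfl⟩ := j.eq_self_or_eq_succAbove v
  · simp
  simp only [mem_filter, and_congr_left_iff, succAbove_right_injective.mem_finset_image]
  intro hu
  rw [mem_rlmVal, mem_rlmVal, symm_extendAt_apply_succAbove, forall_iff_succAbove j]
  simp [extendAt_apply_self, extendAt_apply_succAbove, succAbove_lt_succAbove_iff, hu]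

lemma filter_excVal_extendAt :
    (excVal (extendAt j ρ)).filter (· ≠ j) = ((excVal ρ).image j.succAbove).filter (· ≠ j) := by
  ext v
  obtain rfl | ⟨u, rfl⟩ := j.eq_self_or_eq_succAbove v
  · simp
  simp only [mem_filter, and_congr_left_iff, succAbove_right_injective.mem_finset_image]
  intro _
  rw [mem_excVal, mem_excVal, symm_extendAt_apply_succAbove, succAbove_lt_succAbove_iff]

end ExtendAt

section InsertLast

variable {m : ℕ} (a : Fin m) (τ : Perm (Fin m))

lemma symm_insertLast_apply_castSucc (u : Fin m) :
    (insertLast a τ).symm (castSucc u) = if u = a then last m else castSucc (τ.symm u) := by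
  split_ifs with hu
  · rw [hu, symm_apply_eq, insertLast_apply_last]
  · rw [symm_apply_eq, insertLast_apply_castSucc, if_neg (by simpa using hu), apply_symm_apply]

lemma symm_insertLast_apply_last : (insertLast a τ).symm (last m) = castSucc (τ.symm a) := by
  rw [symm_apply_eq, insertLast_apply_castSucc, if_pos (apply_symm_apply τ a)]

lemma forall_insertLast_apply_ne_iff :
    (∀ i, insertLast a τ i ≠ i) ↔ ∀ i, i ≠ a → τ i ≠ i := by
  simp only [forall_fin_succ', insertLast_apply_castSucc, insertLast_apply_last, ne_eq,
    castSucc_ne_last, not_false_eq_true, and_true]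
  refine forall_congr' fun i => ?_
  split_ifs with hi
  · simp only [(castSucc_lt_last i).ne', not_false_eq_true, true_iff]
    exact fun hia hii => hia (hii ▸ hi)
  · simp only [castSucc_inj]
    exact ⟨fun h _ => h, fun h hii => h (hii ▸ hi) hii⟩

lemma castSucc_mem_rlmVal_insertLast_iff {u : Fin m} (hu : u ≠ a) :
    castSucc u ∈ rlmVal (insertLast a τ) ↔ u ∈ rlmVal τ ∧ u < a := by
  rw [mem_rlmVal, mem_rlmVal, symm_insertLast_apply_castSucc, if_neg hu, forall_fin_succ']
  simp only [insertLast_apply_castSucc, insertLast_apply_last, castSucc_lt_castSucc_iff,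
    castSucc_lt_last, forall_const]
  refine and_congr_left fun hua => forall₂_congr fun k _ => ?_
  split_ifs with hk
  · simpa [hk] using hua
  · exact castSucc_lt_castSucc_iff

lemma rlmVal_insertLast :
    rlmVal (insertLast a τ) = insert (castSucc a) (((rlmVal τ).filter (· < a)).image castSucc) := by
  ext v
  obtain ⟨u, rfl⟩ | rfl := v.eq_castSucc_or_eq_last
  · simp only [mem_insert, castSucc_inj, (castSucc_injective _).mem_finset_image, mem_filter]
    rcases eq_or_ne u a with rfl | hu
    · simp only [true_or, iff_true, mem_rlmVal, symm_insertLast_apply_castSucc, if_pos]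
      exact fun k hk => absurd hk (not_lt.2 (le_last k))
    · simp [castSucc_mem_rlmVal_insertLast_iff a τ hu, hu]
  · simp only [mem_insert, (castSucc_lt_last a).ne', false_or, mem_image, castSucc_ne_last,
      and_false, exists_false, iff_false, mem_rlmVal, symm_insertLast_apply_last]
    exact fun h => (h _ (castSucc_lt_last _)).not_ge (insertLast_apply_last a τ ▸ le_last _)

lemma excVal_insertLast :
    excVal (insertLast a τ) = insert (last m) (((excVal τ).filter (· ≠ a)).image castSucc) := by
  ext v
  obtain ⟨u, rfl⟩ | rfl := v.eq_castSucc_or_eq_last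
  · simp only [mem_insert, castSucc_ne_last, (castSucc_injective _).mem_finset_image, mem_filter,
      false_or, mem_excVal, symm_insertLast_apply_castSucc]
    split_ifs with hu
    · simp [hu, not_lt.2 (le_last _)]
    · simp [hu]
  · simp [mem_excVal, symm_insertLast_apply_last]

end InsertLast

section Products

variable {M : Type*} [CommMonoid M] {n : ℕ}

lemma prod_eq_prod_succAbove_of_eq_one (f : Fin (n + 1) → M) {j : Fin (n + 1)} (hf : f j = 1)
    {s : Finset (Fin n)} {t : Finset (Fin (n + 1))} (hst : ∀ u, j.succAbove u ∈ t ↔ u ∈ s) :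
    ∏ v ∈ t, f v = ∏ u ∈ s, f (j.succAbove u) := by
  calc ∏ v ∈ t, f v = ∏ v, if v ∈ t then f v else 1 := by rw [prod_ite_mem, univ_inter]
    _ = ∏ u, if u ∈ s then f (j.succAbove u) else 1 := by
      rw [prod_univ_succAbove _ j]; simp [hf, hst]
    _ = ∏ u ∈ s, f (j.succAbove u) := by rw [prod_ite_mem, univ_inter]

lemma prod_Iic_castSucc_eq_mul (f : Fin (n + 1) → M) (a : Fin n) :
    ∏ v ∈ Iic (castSucc a), f v = f (castSucc a) * ∏ u ∈ Iio a, f (castSucc u) := by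
  rw [Iic_eq_cons_Iio, Finset.prod_cons, prod_Iio_castSucc]

lemma prod_Ioi_castSucc_eq_mul (f : Fin (n + 1) → M) (a : Fin n) :
    ∏ v ∈ Ioi (castSucc a), f v = f (last n) * ∏ u ∈ Ioi a, f (castSucc u) := by
  have : Ioi (castSucc a) = insert (last n) ((Ioi a).map castSuccEmb) := by
    ext v; obtain ⟨u, rfl⟩ | rfl := v.eq_castSucc_or_eq_last <;> simp [castSucc_lt_last, le_last]
  rw [this, prod_insert (by simp), prod_map, coe_castSuccEmb]

end Products

lemma sum_derangements_eq_sum_apply_last {M : Type*} [AddCommMonoid M] {n : ℕ}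
    (f : Perm (Fin (n + 1)) → M) :
    ∑ σ ∈ univ.filter (fun σ : Perm (Fin (n + 1)) => ∀ i, σ i ≠ i), f σ
      = ∑ a : Fin n, ∑ σ ∈ univ.filter (fun σ : Perm (Fin (n + 1)) =>
          (∀ i, σ i ≠ i) ∧ σ (last n) = castSucc a), f σ := by
  rw [← sum_fiberwise _ (fun σ => σ (last n)), Fin.sum_univ_castSucc]
  simp_rw [filter_filter]
  rw [filter_false_of_mem (fun σ _ hσ => hσ.1 (last n) hσ.2), sum_empty, add_zero]

section Formula

variable {R : Type*} [CommRing R]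

def rlmExcWeight {n : ℕ} (σ : Perm (Fin n)) (x y : Fin n → R) : R :=
  (-1) ^ cyc σ * (∏ v ∈ rlmVal σ, x v) * ∏ v ∈ excVal σ, y v

lemma rlmExcWeight_extendAt {m : ℕ} (j : Fin (m + 1)) (ρ : Perm (Fin m))
    {x y : Fin (m + 1) → R} (hx : ∀ v, j ≤ v → x v = 1) (hy : y j = 1) :
    rlmExcWeight (extendAt j ρ) x y
      = -rlmExcWeight ρ (fun u => x (j.succAbove u)) (fun u => y (j.succAbove u)) := by
  have hx' (s : Finset (Fin (m + 1))) : ∏ v ∈ s.filter (· < j), x v = ∏ v ∈ s, x v :=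
    prod_filter_of_ne fun v _ hv => not_le.1 (mt (hx v) hv)
  have hy' (s : Finset (Fin (m + 1))) : ∏ v ∈ s.filter (· ≠ j), y v = ∏ v ∈ s, y v :=
    prod_filter_of_ne fun v _ hv h => hv (h ▸ hy)
  rw [rlmExcWeight, rlmExcWeight, neg_one_pow_cyc, neg_one_pow_cyc, sign_extendAt,
    ← hx', filter_rlmVal_extendAt, hx', ← hy', filter_excVal_extendAt, hy',
    prod_image succAbove_right_injective.injOn, prod_image succAbove_right_injective.injOn]
  ring

lemma rlmExcWeight_insertLast {m : ℕ} (a : Fin m) (τ : Perm (Fin m)) (x y : Fin (m + 1) → R) :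
    rlmExcWeight (insertLast a τ) x y
      = x (castSucc a) * y (last m) * rlmExcWeight τ (fun u => if u < a then x (castSucc u) else 1)
          (fun u => if u ≠ a then y (castSucc u) else 1) := by
  rw [rlmExcWeight, rlmExcWeight, neg_one_pow_cyc, neg_one_pow_cyc, sign_insertLast,
    rlmVal_insertLast, excVal_insertLast, prod_insert (by simp), prod_insert (by simp),
    prod_image (castSucc_injective _).injOn, prod_image (castSucc_injective _).injOn,
    prod_filter, prod_filter]
  push_cast
  ring

variable (R) in
def DerangementSumFormula (m : ℕ) : Prop :=
  ∀ (a : Fin m) (x y : Fin (m + 1) → R),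
    ∑ σ ∈ univ.filter (fun σ : Perm (Fin (m + 1)) => (∀ i, σ i ≠ i) ∧ σ (last m) = castSucc a),
      rlmExcWeight σ x y
    = -((∏ v ∈ Iic (castSucc a), x v) * ∏ v ∈ Ioi (castSucc a), y v)

variable (R) in
/-- Under the hypotheses on `x` and `y`, `rlmExcWeight τ x y` only sees the right-to-left minimum
values below `j` and the excedance values other than `j`. -/
def NearDerangementSumFormula (m : ℕ) : Prop :=
  ∀ (j : Fin (m + 1)) (x y : Fin (m + 1) → R), (∀ v, j ≤ v → x v = 1) → y j = 1 →
    ∑ τ ∈ univ.filter (fun τ : Perm (Fin (m + 1)) => ∀ i, i ≠ j → τ i ≠ i), rlmExcWeight τ x y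
    = -((∏ v ∈ Iio j, x v) * ∏ v ∈ Ioi j, y v)

lemma nearDerangementSumFormula_zero : NearDerangementSumFormula R 0 := by
  intro j x y hx hy
  have hj (v : Fin 1) : v = j := (fin_one_eq_zero v).trans (fin_one_eq_zero j).symm
  have hx1 (v : Fin 1) : x v = 1 := hx v (hj v).ge
  have hy1 (v : Fin 1) : y v = 1 := hj v ▸ hy
  simp [rlmExcWeight, cyc, hx1, hy1, hj, univ_unique]

lemma derangementSumFormula_succ {m : ℕ} (h : NearDerangementSumFormula R m) :
    DerangementSumFormula R (m + 1) := by
  intro a x y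
  have hder : univ.filter (fun τ => ∀ i, insertLast a τ i ≠ i)
      = univ.filter (fun τ : Perm (Fin (m + 1)) => ∀ i, i ≠ a → τ i ≠ i) :=
    filter_congr fun τ _ => forall_insertLast_apply_ne_iff a τ
  rw [sum_filter_and_apply_last_eq, hder,
    sum_congr rfl fun τ _ => rlmExcWeight_insertLast a τ x y, ← mul_sum,
    h a _ _ (fun v hv => if_neg hv.not_gt) (if_neg (not_not.2 rfl)),
    prod_Iic_castSucc_eq_mul, prod_Ioi_castSucc_eq_mul,
    prod_congr rfl fun u hu => if_pos (mem_Iio.1 hu),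
    prod_congr rfl fun u hu => if_pos (mem_Ioi.1 hu).ne']
  ring

lemma sum_succAbove_castSucc_sub_sum_castSucc {G : Type*} [AddCommGroup G] {m : ℕ}
    (A : Fin (m + 2) → G) (j : Fin (m + 2)) (hlast : A (j.succAbove (last m)) = A (last _)) :
    ∑ a : Fin m, A (j.succAbove (castSucc a)) - ∑ a : Fin (m + 1), A (castSucc a) = -A j := by
  have h := Fin.sum_univ_succAbove A j
  rw [Fin.sum_univ_castSucc (fun u => A (j.succAbove u)), hlast, Fin.sum_univ_castSucc A,
    ← add_assoc, add_left_inj] at h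
  rw [h]
  abel

lemma nearDerangementSumFormula_succ {m : ℕ} (h₁ : DerangementSumFormula R (m + 1))
    (h₀ : DerangementSumFormula R m) : NearDerangementSumFormula R (m + 1) := by
  intro j x y hx hy
  obtain ⟨A, hA⟩ : ∃ A : Fin (m + 2) → R, ∀ k, A k = (∏ v ∈ Iic k, x v) * ∏ v ∈ Ioi k, y v :=
    ⟨_, fun _ => rfl⟩
  have hA_succAbove (k : Fin (m + 2)) (u : Fin (m + 1)) (h : ∀ w, j.succAbove w ≤ k ↔ w ≤ u) :
      A k = (∏ w ∈ Iic u, x (j.succAbove w)) * ∏ w ∈ Ioi u, y (j.succAbove w) := by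
    rw [hA, prod_eq_prod_succAbove_of_eq_one x (hx j le_rfl) (s := Iic u) (by simpa using h),
      prod_eq_prod_succAbove_of_eq_one y hy (s := Ioi u)
        (fun w => by rw [mem_Ioi, mem_Ioi, ← not_le, ← not_le, h])]
  have hfixed : ∑ τ ∈ univ.filter (fun τ : Perm (Fin (m + 2)) =>
      (∀ i, i ≠ j → τ i ≠ i) ∧ τ j = j), rlmExcWeight τ x y
      = ∑ a : Fin m, A (j.succAbove (castSucc a)) := by
    rw [sum_filter_and_apply_self_eq, filter_congr fun ρ _ => forall_ne_extendAt_apply_ne_iff j ρ,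
      sum_congr rfl fun ρ _ => rlmExcWeight_extendAt j ρ hx hy, sum_neg_distrib,
      sum_derangements_eq_sum_apply_last, ← sum_neg_distrib]
    exact sum_congr rfl fun a _ => by
      rw [h₀, neg_neg, hA_succAbove _ _ fun w => succAbove_le_succAbove_iff]
  have hderanged : ∑ τ ∈ univ.filter (fun τ : Perm (Fin (m + 2)) =>
      (∀ i, i ≠ j → τ i ≠ i) ∧ ¬τ j = j), rlmExcWeight τ x y
      = -∑ a : Fin (m + 1), A (castSucc a) := by
    have hder : univ.filter (fun τ : Perm (Fin (m + 2)) => (∀ i, i ≠ j → τ i ≠ i) ∧ ¬τ j = j)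
        = univ.filter (fun τ : Perm (Fin (m + 2)) => ∀ i, τ i ≠ i) :=
      filter_congr fun τ _ => ⟨fun h i => (eq_or_ne i j).elim (· ▸ h.2) (h.1 i),
        fun h => ⟨fun i _ => h i, h j⟩⟩
    rw [hder, sum_derangements_eq_sum_apply_last, ← sum_neg_distrib]
    exact sum_congr rfl fun a _ => by rw [h₁, hA]
  have hlast : A (j.succAbove (last m)) = A (last _) := by
    rw [hA_succAbove _ (last m) fun w => by simp [le_last],
      hA_succAbove _ (last m) fun w => by simp [le_last]]
  rw [← sum_filter_add_sum_filter_not _ (fun τ => τ j = j), filter_filter, filter_filter, hfixed,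
    hderanged, ← sub_eq_add_neg, sum_succAbove_castSucc_sub_sum_castSucc A j hlast, hA,
    Iic_eq_cons_Iio, Finset.prod_cons, hx j le_rfl, one_mul]

lemma derangementSumFormula (m : ℕ) : DerangementSumFormula R m := by
  induction m using Nat.twoStepInduction with
  | zero => exact fun a => a.elim0
  | one => exact derangementSumFormula_succ nearDerangementSumFormula_zero
  | more m h₀ h₁ => exact derangementSumFormula_succ (nearDerangementSumFormula_succ h₁ h₀)

end Formula

/-- With `Fin n` representing `[n]` 0-based (index `i : Fin n` is `i+1`),
the variable `x i` is `x_{i+1}`; `σ ⟨n-1⟩ = ⟨j-1⟩` encodes `σ(n) = j`. -/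
theorem stmt3 {R : Type*} [CommRing R] (n j : ℕ) (x y : Fin n → R)
    (hj1 : 1 ≤ j) (hj2 : j ≤ n - 1) :
    ∑ σ ∈ Finset.univ.filter (fun σ : Equiv.Perm (Fin n) =>
        (∀ i, σ i ≠ i) ∧ σ ⟨n - 1, by omega⟩ = ⟨j - 1, by omega⟩),
      (-1 : R) ^ cyc σ * (∏ i ∈ rlmVal σ, x i) * (∏ i ∈ excVal σ, y i)
    = -((∏ i ∈ Finset.univ.filter (fun i : Fin n => i.val < j), x i) *
        ∏ i ∈ Finset.univ.filter (fun i : Fin n => j ≤ i.val), y i) := by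
  obtain ⟨m, rfl⟩ : ∃ m, n = m + 1 := ⟨n - 1, by omega⟩
  convert derangementSumFormula m ⟨j - 1, by omega⟩ x y using 4
  · rfl
  · rfl
  · ext i
    simp only [mem_filter, mem_univ, true_and, castSucc_mk, mem_Iic, Fin.le_def]
    omega
  · ext i
    simp only [mem_filter, mem_univ, true_and, castSucc_mk, mem_Ioi, Fin.lt_def]
    omega
end

section
/- For n ≥ 1, the sum over all permutations σ of [n] of (-1)^{cyc(σ)} · ∏_{i ∈ EXCi(σ)} x_i equals -∏_{j=1}^{n-1}(x_j - 1). -/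
open Finset

/-- Set of excedance indices of a permutation. -/
def excIdx {n : ℕ} (σ : Equiv.Perm (Fin n)) : Finset (Fin n) :=
  Finset.univ.filter fun i => i < σ i

section Aux

variable {R : Type*} [CommRing R]

/-- sign relation -/
lemma cyc_sign {n : ℕ} (σ : Equiv.Perm (Fin n)) :
    ((-1 : R)) ^ cyc σ = (-1) ^ n * ((Equiv.Perm.sign σ : ℤ) : R) := by
  have hs : σ.cycleType.sum = σ.support.card := Equiv.Perm.sum_cycleType σ
  have hfix : (Finset.univ.filter fun i => σ i = i).card = n - σ.support.card := by
    have := Finset.card_filter_add_card_filter_not (s := (Finset.univ : Finset (Fin n)))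
      (p := fun i => σ i = i)
    simp only [Finset.card_univ, Fintype.card_fin] at this
    have hsup : σ.support = (Finset.univ.filter fun i => ¬ σ i = i) := rfl
    rw [hsup]
    omega
  have hle : σ.support.card ≤ n := by
    simpa using Finset.card_le_card (Finset.subset_univ σ.support)
  have hsign : ((Equiv.Perm.sign σ : ℤ) : R)
      = (-1) ^ (σ.cycleType.sum + Multiset.card σ.cycleType) := by
    rw [Equiv.Perm.sign_of_cycleType]; push_cast; ring
  rw [hsign, cyc, hfix, ← hs]
  have h2 : (-1 : R) ^ (n - σ.cycleType.sum) * (-1) ^ (σ.cycleType.sum) = (-1) ^ n := by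
    rw [← pow_add, Nat.sub_add_cancel (hs ▸ hle)]
  have hsq : (-1 : R) ^ σ.cycleType.sum * (-1) ^ σ.cycleType.sum = 1 := by
    rw [← pow_add, ← two_mul, pow_mul]; norm_num
  have h3 : (-1 : R) ^ (n - σ.cycleType.sum) = (-1) ^ n * (-1) ^ σ.cycleType.sum := by
    calc (-1 : R) ^ (n - σ.cycleType.sum)
        = (-1) ^ (n - σ.cycleType.sum) * ((-1) ^ σ.cycleType.sum * (-1) ^ σ.cycleType.sum) := by
          rw [hsq, mul_one]
      _ = ((-1) ^ (n - σ.cycleType.sum) * (-1) ^ σ.cycleType.sum) * (-1) ^ σ.cycleType.sum := by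
          ring
      _ = (-1) ^ n * (-1) ^ σ.cycleType.sum := by rw [h2]
  rw [pow_add, h3]; ring

end Aux

/-- `x i` is `x_{i+1}`; the right-hand product ranges over `x_1,…,x_{n-1}`. -/
theorem stmt17 {R : Type*} [CommRing R] (n : ℕ) (hn : 1 ≤ n) (x : Fin n → R) :
    ∑ σ : Equiv.Perm (Fin n), (-1 : R) ^ cyc σ * ∏ i ∈ excIdx σ, x i
    = -∏ i ∈ Finset.univ.filter (fun i : Fin n => i.val < n - 1), (x i - 1) := by
  obtain ⟨m, rfl⟩ : ∃ m, n = m + 1 := ⟨n - 1, (Nat.succ_pred_eq_of_pos hn).symm⟩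
  clear hn
  -- the matrix
  set M : Matrix (Fin (m + 1)) (Fin (m + 1)) R := fun a b => if b < a then x b else 1 with hM
  set E : Matrix (Fin (m + 1)) (Fin (m + 1)) R := fun i j =>
    (if j = i then (1 : R) else 0) + (if i ≠ Fin.last m ∧ j = i + 1 then -1 else 0) with hE
  -- step 1: LHS = (-1)^N * det M
  have hprod : ∀ σ : Equiv.Perm (Fin (m + 1)), (∏ i, M (σ i) i) = ∏ i ∈ excIdx σ, x i := by
    intro σ
    rw [excIdx, Finset.prod_filter]
  have step1 : ∑ σ : Equiv.Perm (Fin (m + 1)), (-1 : R) ^ cyc σ * ∏ i ∈ excIdx σ, x i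
      = (-1) ^ (m + 1) * M.det := by
    rw [Matrix.det_apply', Finset.mul_sum]
    refine Finset.sum_congr rfl fun σ _ => ?_
    rw [cyc_sign, hprod]
    try ring
  rw [step1]
  -- step 2: det E = 1
  have hEtri : E.BlockTriangular id := by
    intro i j hij
    simp only [id] at hij
    have h1 : j ≠ i := ne_of_lt hij
    have h2 : ¬ (i ≠ Fin.last m ∧ j = i + 1) := by
      rintro ⟨hlast, rfl⟩
      have : (i + 1).val = i.val + 1 := Fin.val_add_one_of_lt (Fin.lt_last_iff_ne_last.2 hlast)
      have := hij
      rw [Fin.lt_iff_val_lt_val] at this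
      omega
    simp [hE, h1, h2]
  have hEdet : E.det = 1 := by
    rw [Matrix.det_of_upperTriangular hEtri]
    refine Finset.prod_eq_one fun i _ => ?_
    have : ¬ (i ≠ Fin.last m ∧ i = i + 1) := by
      rintro ⟨hlast, heq⟩
      have : (i + 1).val = i.val + 1 := Fin.val_add_one_of_lt (Fin.lt_last_iff_ne_last.2 hlast)
      omega
    simp only [hE, this, if_false, if_pos rfl, add_zero]
    norm_num
  -- step 3: E * M entrywise
  have hEM : ∀ i j, (E * M) i j = if i ≠ Fin.last m then M i j - M (i + 1) j else M i j := by
    intro i j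
    rw [Matrix.mul_apply]
    simp only [hE, add_mul, ite_mul, one_mul, zero_mul, neg_mul, neg_one_mul]
    rw [Finset.sum_add_distrib, Finset.sum_ite_eq' Finset.univ i (fun k => M k j)]
    simp only [Finset.mem_univ, if_true]
    by_cases hlast : i = Fin.last m
    · subst hlast
      simp
    · have hsum : (∑ k : Fin (m + 1), if i ≠ Fin.last m ∧ k = i + 1 then -M k j else 0)
          = -M (i + 1) j := by
        rw [Finset.sum_eq_single (i + 1)]
        · simp [hlast]
        · intro k _ hk
          simp [hk, hlast]
        · simp
      rw [hsum]
      simp [hlast, sub_eq_add_neg]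
  -- step 4: E*M is lower triangular with known diagonal
  have hEMtri : (E * M).BlockTriangular OrderDual.toDual := by
    intro i j hij
    simp only [OrderDual.toDual_lt_toDual] at hij
    rw [hEM]
    have hne : i ≠ Fin.last m := by
      intro h; subst h
      exact absurd hij (by simp [Fin.lt_last_iff_ne_last, Fin.le_last, not_lt.2 (Fin.le_last j)])
    simp only [hne, ne_eq, not_false_eq_true, if_true]
    have hval : (i + 1).val = i.val + 1 := Fin.val_add_one_of_lt (Fin.lt_last_iff_ne_last.2 hne)
    have h1 : ¬ (j < i) := by rw [Fin.lt_iff_val_lt_val] at hij ⊢; omega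
    have h2 : ¬ (j < i + 1) := by rw [Fin.lt_iff_val_lt_val] at hij ⊢; omega
    simp [hM, h1, h2]
  have hEMdiag : ∀ i : Fin (m + 1), (E * M) i i = if i ≠ Fin.last m then 1 - x i else 1 := by
    intro i
    rw [hEM]
    by_cases hlast : i = Fin.last m
    · simp [hlast, hM]
    · have hval : (i + 1).val = i.val + 1 := Fin.val_add_one_of_lt (Fin.lt_last_iff_ne_last.2 hlast)
      have h1 : ¬ (i < i) := lt_irrefl i
      have h2 : i < i + 1 := by rw [Fin.lt_iff_val_lt_val]; omega
      simp [hlast, hM, h1, h2]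
  have hdetEM : (E * M).det = ∏ i ∈ Finset.univ.erase (Fin.last m), (1 - x i) := by
    rw [Matrix.det_of_lowerTriangular _ hEMtri]
    rw [← Finset.prod_erase_mul _ _ (Finset.mem_univ (Fin.last m))]
    rw [hEMdiag]
    simp only [ne_eq, not_true_eq_false, if_false, mul_one]
    refine Finset.prod_congr rfl fun i hi => ?_
    rw [hEMdiag]
    simp [Finset.mem_erase.1 hi |>.1]
  -- step 5: combine
  have hMdet : M.det = ∏ i ∈ Finset.univ.erase (Fin.last m), (1 - x i) := by
    have := Matrix.det_mul E M
    rw [hEdet, one_mul] at this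
    rw [← this, hdetEM]
  rw [hMdet]
  -- final: rewrite RHS
  have hfilter : Finset.univ.filter (fun i : Fin (m + 1) => i.val < (m + 1) - 1)
      = Finset.univ.erase (Fin.last m) := by
    ext i
    simp only [Finset.mem_filter, Finset.mem_univ, true_and, Finset.mem_erase, and_true]
    constructor
    · intro h heq; subst heq; rw [Fin.val_last] at h; omega
    · intro h
      have : i.val ≤ m := Nat.lt_succ_iff.1 i.isLt
      have : i.val ≠ m := fun hh => h (Fin.ext (by simp [hh]))
      omega
  rw [hfilter]
  have hcard : (Finset.univ.erase (Fin.last m)).card = m := by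
    rw [Finset.card_erase_of_mem (Finset.mem_univ _)]
    simp
  have key : ∏ i ∈ Finset.univ.erase (Fin.last m), (1 - x i)
      = (-1 : R) ^ (Finset.univ.erase (Fin.last m)).card
        * ∏ i ∈ Finset.univ.erase (Fin.last m), (x i - 1) := by
    rw [← Finset.prod_const (-1 : R), ← Finset.prod_mul_distrib]
    exact Finset.prod_congr rfl fun i _ => by ring
  rw [key, hcard]
  have hpow : ((-1 : R) ^ (m + 1)) = (-1) ^ m * (-1) := pow_succ _ _
  rw [hpow]
  have hsq : (-1 : R) ^ m * (-1) ^ m = 1 := by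
    rw [← pow_add, ← two_mul, pow_mul]; norm_num
  calc (-1 : R) ^ m * -1 * ((-1) ^ m * ∏ i ∈ Finset.univ.erase (Fin.last m), (x i - 1))
      = ((-1) ^ m * (-1) ^ m) * (-1 * ∏ i ∈ Finset.univ.erase (Fin.last m), (x i - 1)) := by
        ring
    _ = -∏ i ∈ Finset.univ.erase (Fin.last m), (x i - 1) := by rw [hsq]; ring
end
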